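/- If C is a self-complementary binary linear [48,10] code with minimum distance 20, every nonzero codeword weight in {20, 24, 28, 48}, and whose dual has minimum distance at least 3 (and at least 6 in even positions, i.e., A₂^⊥ = 0), then the weight distribution of C is uniquely determined: A₀ = 1, A₂₀ = 348, A₂₄ = 326, A₂₈ = 348, A₄₈ = 1. -/

import Mathlib

/-- Hamming weight of a binary vector. -/
def wt {n : ℕ} (x : Fin n → ZMod 2) : ℕ :=
  (Finset.univ.filter fun i => x i ≠ 0).card

/-- Dual code with respect to the standard bilinear form. -/
def dualCode {n : ℕ} (C : Submodule (ZMod 2) (Fin n → ZMod 2)) :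
    Submodule (ZMod 2) (Fin n → ZMod 2) where
  carrier := {x | ∀ c ∈ C, ∑ i, x i * c i = 0}
  add_mem' := by
    intro a b ha hb c hc
    have ha' := ha c hc
    have hb' := hb c hc
    simp only [Set.mem_setOf_eq, Pi.add_apply, add_mul] at *
    rw [Finset.sum_add_distrib, ha', hb', add_zero]
  zero_mem' := by
    intro c hc
    simp
  smul_mem' := by
    intro r a ha c hc
    have ha' := ha c hc
    simp only [Set.mem_setOf_eq, Pi.smul_apply, smul_eq_mul, mul_assoc] at *
    rw [← Finset.mul_sum, ha', mul_zero]

/-- Minimum distance (minimum nonzero Hamming weight) of a binary linear code. -/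
noncomputable def minDist {n : ℕ} (C : Submodule (ZMod 2) (Fin n → ZMod 2)) : ℕ :=
  sInf {w | ∃ c ∈ C, c ≠ 0 ∧ wt c = w}

/-- Number of codewords of weight `w` in `C` (the weight distribution `A_w`). -/
noncomputable def wtCount {n : ℕ} (C : Submodule (ZMod 2) (Fin n → ZMod 2)) (w : ℕ) : ℕ :=
  Nat.card {c : Fin n → ZMod 2 // c ∈ C ∧ wt c = w}

/-!
Writing `σ(a) = (-1)^a`, one has `∑ᵢ σ(cᵢ) = 48 - 2 wt(c)`. Squaring and summing over `C`, the
diagonal terms give `48 |C|`, and each cross term `i ≠ j` is the sum over `C` of the character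
`c ↦ σ(cᵢ + cⱼ)`, which vanishes because `eᵢ + eⱼ ∉ C^⊥` (`A₂^⊥ = 0`). This is the second
power-moment (MacWilliams) identity `∑_w A_w (48 - 2w)² = 48 · 2¹⁰`. Together with
`∑_w A_w = 2¹⁰`, `A₀ = A₄₈ = 1` and `A₂₀ = A₂₈` (complementation by the all-one word) it leaves a
linear system with a unique solution.
-/

open Finset

section Weight

variable {n : ℕ}

lemma wt_eq_hammingNorm (x : Fin n → ZMod 2) : wt x = hammingNorm x := rfl

lemma wt_le (x : Fin n → ZMod 2) : wt x ≤ n := by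
  simpa [wt_eq_hammingNorm] using hammingNorm_le_card_fintype (x := x)

lemma wt_add_one (x : Fin n → ZMod 2) : wt (x + 1) = n - wt x := by
  have hcompl : univ.filter (fun i => (x + 1) i ≠ 0) = (univ.filter fun i => x i ≠ 0)ᶜ := by
    ext i
    simp only [mem_filter, mem_univ, true_and, mem_compl, Pi.add_apply, Pi.one_apply]
    exact (show ∀ a : ZMod 2, a + 1 ≠ 0 ↔ ¬a ≠ 0 by decide) (x i)
  rw [wt, hcompl, card_compl, Fintype.card_fin, wt]

lemma wt_single_add_single {i j : Fin n} (hij : i ≠ j) :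
    wt (Pi.single i 1 + Pi.single j 1 : Fin n → ZMod 2) = 2 := by
  have hsupp : univ.filter (fun k => (Pi.single i 1 + Pi.single j 1 : Fin n → ZMod 2) k ≠ 0)
      = {i, j} := by
    ext k
    by_cases hki : k = i <;> by_cases hkj : k = j <;> simp_all [Pi.single_apply]
  rw [wt, hsupp, card_pair hij]

end Weight

def signChar : AddChar (ZMod 2) ℤ := AddChar.zmodChar 2 (ζ := -1) (by norm_num)

lemma signChar_eq (a : ZMod 2) : signChar a = 1 - 2 * (if a ≠ 0 then 1 else 0) := by
  fin_cases a <;> rfl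

lemma signChar_eq_one_iff (a : ZMod 2) : signChar a = 1 ↔ a = 0 := by
  revert a; decide

lemma signChar_mul_self (a : ZMod 2) : signChar a * signChar a = 1 := by
  rw [← AddChar.map_add_eq_mul, CharTwo.add_self_eq_zero, AddChar.map_zero_eq_one]

lemma sum_signChar_eq_sub_two_mul_wt {n : ℕ} (x : Fin n → ZMod 2) :
    ∑ i, signChar (x i) = (n : ℤ) - 2 * wt x := by
  simp only [signChar_eq, sum_sub_distrib, ← mul_sum, sum_boole, wt]
  simp

section Code

variable {n : ℕ} (C : Submodule (ZMod 2) (Fin n → ZMod 2))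

lemma sum_signChar_pairing_eq_zero [Fintype C] {v : Fin n → ZMod 2} (hv : v ∉ dualCode C) :
    ∑ c : C, signChar (∑ k, v k * (c : Fin n → ZMod 2) k) = 0 := by
  let f : C →+ ZMod 2 := AddMonoidHom.mk' (fun c => ∑ k, v k * (c : Fin n → ZMod 2) k)
    (fun a b => by simp [mul_add, sum_add_distrib])
  have hf : signChar.compAddMonoidHom f ≠ 1 := by
    obtain ⟨c, hc, hvc⟩ : ∃ c ∈ C, ∑ k, v k * c k ≠ 0 := by
      simpa [dualCode] using hv
    exact AddChar.ne_one_iff.2 ⟨⟨c, hc⟩, (signChar_eq_one_iff _).not.2 hvc⟩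
  exact AddChar.sum_eq_zero_of_ne_one hf

lemma notMem_of_wtCount_eq_zero {w : ℕ} (h : wtCount C w = 0) {v : Fin n → ZMod 2}
    (hv : wt v = w) : v ∉ C := fun hvC =>
  have : Nonempty {c // c ∈ C ∧ wt c = w} := ⟨⟨v, hvC, hv⟩⟩
  Nat.card_pos.ne' h

lemma sum_single_add_single_mul {i j : Fin n} (c : Fin n → ZMod 2) :
    ∑ k, (Pi.single i 1 + Pi.single j 1 : Fin n → ZMod 2) k * c k = c i + c j := by
  simp [add_mul, sum_add_distrib, Pi.single_apply]

lemma sum_sq_sub_two_mul_wt_eq [Fintype C] (hA2 : wtCount (dualCode C) 2 = 0) :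
    ∑ c : C, ((n : ℤ) - 2 * wt (c : Fin n → ZMod 2)) ^ 2 = (n : ℤ) * Fintype.card C := by
  have hpair : ∀ i j, ∑ c : C, signChar (c.1 i) * signChar (c.1 j)
      = if i = j then (Fintype.card C : ℤ) else 0 := by
    intro i j
    split_ifs with hij
    · simp [hij, signChar_mul_self]
    · have hv := notMem_of_wtCount_eq_zero _ hA2 (wt_single_add_single hij)
      rw [← sum_signChar_pairing_eq_zero C hv]
      simp only [sum_single_add_single_mul, AddChar.map_add_eq_mul]
  calc ∑ c : C, ((n : ℤ) - 2 * wt (c : Fin n → ZMod 2)) ^ 2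
      = ∑ c : C, ∑ i, ∑ j, signChar (c.1 i) * signChar (c.1 j) := by
        simp only [← sum_signChar_eq_sub_two_mul_wt, sq, sum_mul_sum]
    _ = ∑ i, ∑ j, ∑ c : C, signChar (c.1 i) * signChar (c.1 j) := by
        rw [sum_comm]; exact sum_congr rfl fun i _ => sum_comm
    _ = (n : ℤ) * Fintype.card C := by simp [hpair]

lemma wtCount_eq_card [Fintype C] (w : ℕ) :
    wtCount C w = #{c : C | wt (c : Fin n → ZMod 2) = w} := by
  rw [wtCount, ← Nat.card_congr (Equiv.subtypeSubtypeEquivSubtypeInter (· ∈ C) (wt · = w)),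
    Nat.card_eq_fintype_card, Fintype.card_subtype]

lemma sum_wtCount_mul [Fintype C] {W : Finset ℕ} (hW : ∀ c ∈ C, wt c ∈ W) (f : ℕ → ℤ) :
    ∑ w ∈ W, (wtCount C w : ℤ) * f w = ∑ c : C, f (wt (c : Fin n → ZMod 2)) := by
  rw [← sum_fiberwise_of_maps_to (fun (c : C) _ => hW c c.2)]
  refine sum_congr rfl fun w _ => ?_
  rw [wtCount_eq_card, sum_congr rfl fun c hc => by rw [(mem_filter.1 hc).2], sum_const,
    nsmul_eq_mul]

lemma wtCount_zero : wtCount C 0 = 1 := by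
  rw [wtCount, Nat.card_eq_one_iff_exists]
  exact ⟨⟨0, C.zero_mem, hammingNorm_zero⟩, fun c => Subtype.ext (hammingNorm_eq_zero.1 c.2.2)⟩

lemma wtCount_sub_of_one_mem (h1 : 1 ∈ C) {w : ℕ} (hw : w ≤ n) :
    wtCount C (n - w) = wtCount C w := by
  refine (Nat.card_congr (Equiv.subtypeEquiv (Equiv.addRight 1) fun c => ?_)).symm
  rw [Equiv.coe_addRight, C.add_mem_iff_left h1, wt_add_one]
  have := wt_le c
  constructor <;> rintro ⟨hc, hcw⟩ <;> exact ⟨hc, by omega⟩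

end Code

theorem stmt_4_general (C : Submodule (ZMod 2) (Fin 48 → ZMod 2))
    (hdim : Module.finrank (ZMod 2) C = 10)
    (hsc : (fun _ => (1 : ZMod 2)) ∈ C)
    (hw : ∀ c ∈ C, c ≠ 0 → wt c ∈ ({20, 24, 28, 48} : Set ℕ))
    (hA2 : wtCount (dualCode C) 2 = 0) :
    wtCount C 0 = 1 ∧ wtCount C 20 = 348 ∧ wtCount C 24 = 326 ∧
      wtCount C 28 = 348 ∧ wtCount C 48 = 1 := by
  classical
  have hW : ∀ c ∈ C, wt c ∈ ({0, 20, 24, 28, 48} : Finset ℕ) := by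
    intro c hc
    by_cases h0 : c = 0
    · simp [h0, wt_eq_hammingNorm]
    · exact mem_insert_of_mem (by simpa using hw c hc h0)
  have hcard : Fintype.card C = 1024 := by
    rw [Module.card_eq_pow_finrank (K := ZMod 2), hdim, ZMod.card]; rfl
  have hA0 := wtCount_zero C
  have hA48 : wtCount C 48 = 1 := (wtCount_sub_of_one_mem C hsc le_rfl).symm.trans hA0
  have hA28 : wtCount C 28 = wtCount C 20 := wtCount_sub_of_one_mem C hsc (w := 20) (by norm_num)
  have hcount : (wtCount C 0 + wtCount C 20 + wtCount C 24 + wtCount C 28 + wtCount C 48 : ℤ)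
      = 1024 := by
    simpa [sum_insert, hcard, add_assoc] using sum_wtCount_mul C hW fun _ => 1
  have hmoment : (2304 * wtCount C 0 + 64 * wtCount C 20 + 64 * wtCount C 28
      + 2304 * wtCount C 48 : ℤ) = 48 * 1024 := by
    have := (sum_wtCount_mul C hW fun w => (((48 : ℕ) : ℤ) - 2 * w) ^ 2).trans
      (sum_sq_sub_two_mul_wt_eq C hA2)
    norm_num [sum_insert, hcard] at this
    linarith
  omega

/-- The weight distribution of a self-complementary [48,10,20] subcode with
weights in {20,24,28,48} and dual distance at least 3 (with no dual words of
weight 2) is uniquely determined. -/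
theorem stmt_4 (C : Submodule (ZMod 2) (Fin 48 → ZMod 2))
    (hdim : Module.finrank (ZMod 2) C = 10)
    (hsc : (fun _ => (1 : ZMod 2)) ∈ C)
    (hmin : minDist C = 20)
    (hw : ∀ c ∈ C, c ≠ 0 → wt c ∈ ({20, 24, 28, 48} : Set ℕ))
    (hd3 : 3 ≤ minDist (dualCode C))
    (hA2 : wtCount (dualCode C) 2 = 0) :
    wtCount C 0 = 1 ∧ wtCount C 20 = 348 ∧ wtCount C 24 = 326 ∧
      wtCount C 28 = 348 ∧ wtCount C 48 = 1 :=
  stmt_4_general C hdim hsc hw hA2
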